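/- Suppose B, β, μ > 0, α, d ≥ 0, and the delays satisfy T₁ ≥ 0, T₂ > 0, T₃ ≥ 0. Set S₀* = B/μ and R₀* = β·S₀*/(μ+d+α). Assume R₀* > 1 and T₁ + T₂ ≤ (1/μ)·log(g(0)). Then there exists a unique triple (S*, E*, I*) with S* > 0, E* > 0, I* > 0 satisfying: B − β·S*·e^{−μT₁}·G(I*) − μ·S* + α·I*·e^{−μT₃} = 0; β·S*·e^{−μT₁}·G(I*) − μ·E* − β·S*·e^{−μ(T₁+T₂)}·G(I*) = 0; and β·S*·e^{−μ(T₁+T₂)}·G(I*) − (μ+d+α)·I* = 0. -/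

import Mathlib

/-!
Eliminating `S` and `E` reduces the system to a scalar equation for `I`: an equilibrium has
`μ S = B - c I` with `c = (μ + d + α) e^{μ T₂} - α e^{-μ T₃} > 0`, and then
`(B - c I) · G(I) / I = μ (μ + d + α) e^{μ (T₁ + T₂)} / β`.
Since `G` is strictly concave with `G 0 = 0`, `G(I) / I` decreases strictly from its limit `g 0`
at `0⁺`, so the left side decreases strictly from `B · g 0` to `0` on `(0, B / c]`.
`R₀* > 1` together with `e^{μ (T₁ + T₂)} ≤ g 0` puts the right side strictly inside this range.
-/

open Real Set Filter Topology

theorem exp_neg_mul_eq_exp_neg_mul_add_mul_exp (μ s t : ℝ) :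
    exp (-μ * s) = exp (-μ * (s + t)) * exp (μ * t) := by
  rw [← exp_add]; ring_nf

theorem exp_neg_mul_mul_exp_mul (μ x : ℝ) : exp (-μ * x) * exp (μ * x) = 1 := by
  rw [neg_mul, exp_neg, inv_mul_cancel₀ (exp_pos _).ne']

theorem exp_neg_mul_add_lt_exp_neg_mul {μ t : ℝ} (s : ℝ) (hμ : 0 < μ) (ht : 0 < t) :
    exp (-μ * (s + t)) < exp (-μ * s) :=
  exp_lt_exp.2 (by nlinarith)

section SlopeFromZero

variable {G g : ℝ → ℝ}

theorem strictConcaveOn_Ici_of_hasDerivAt (hderiv : ∀ x ≥ (0 : ℝ), HasDerivAt G (g x) x)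
    (hg : StrictAntiOn g (Ioi 0)) : StrictConcaveOn ℝ (Ici 0) G := by
  refine StrictAntiOn.strictConcaveOn_of_deriv (convex_Ici 0)
    (fun x hx => (hderiv x hx).continuousAt.continuousWithinAt) ?_
  rw [interior_Ici]
  exact hg.congr fun x hx => ((hderiv x (le_of_lt hx)).deriv).symm

theorem StrictConcaveOn.strictAntiOn_div_self (hG : StrictConcaveOn ℝ (Ici 0) G) (hG0 : G 0 = 0) :
    StrictAntiOn (fun x => G x / x) (Ioi 0) := by
  intro x hx y hy hxy
  simpa [hG0] using hG.secant_strict_mono self_mem_Ici (mem_Ici.2 (le_of_lt hx))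
    (mem_Ici.2 (le_of_lt hy)) (ne_of_gt hx) (ne_of_gt hy) hxy

theorem HasDerivAt.tendsto_div_self_nhdsGT_zero {g₀ : ℝ} (hG : HasDerivAt G g₀ 0) (hG0 : G 0 = 0) :
    Tendsto (fun x => G x / x) (𝓝[>] 0) (𝓝 g₀) := by
  simpa [hG0, div_eq_inv_mul] using hG.tendsto_slope_zero_right

end SlopeFromZero

theorem AntitoneOn.le_of_tendsto_nhdsGT {f : ℝ → ℝ} {a l x : ℝ} (hf : AntitoneOn f (Ioi a))
    (hlim : Tendsto f (𝓝[>] a) (𝓝 l)) (hx : a < x) : f x ≤ l :=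
  ge_of_tendsto hlim <| mem_of_superset (Ioo_mem_nhdsGT hx) fun _ hy => hf hy.1 hx hy.2.le

theorem existsUnique_pos_sub_mul_mul_div_self_eq {G : ℝ → ℝ} {B c k g₀ : ℝ}
    (hcont : ContinuousOn G (Ioi 0)) (hlim : Tendsto (fun x => G x / x) (𝓝[>] 0) (𝓝 g₀))
    (hanti : StrictAntiOn (fun x => G x / x) (Ioi 0)) (hpos : ∀ x > 0, 0 < G x)
    (hB : 0 < B) (hc : 0 < c) (hk : 0 < k) (hkB : k < B * g₀) :
    ∃! x, 0 < x ∧ (B - c * x) * (G x / x) = k := by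
  set φ := fun x => (B - c * x) * (G x / x) with hφ
  have hφlim : Tendsto φ (𝓝[>] 0) (𝓝 (B * g₀)) := by
    have hlin : Tendsto (fun x => B - c * x) (𝓝[>] 0) (𝓝 B) := by
      simpa using (tendsto_nhdsWithin_of_tendsto_nhds
        ((continuous_const.sub (continuous_const.mul continuous_id)).tendsto 0) :
        Tendsto (fun x : ℝ => B - c * x) (𝓝[>] 0) (𝓝 (B - c * 0)))
    exact hlin.mul hlim
  obtain ⟨a, hka, ha⟩ :=
    ((hφlim.eventually (lt_mem_nhds hkB)).and (Ioo_mem_nhdsGT (div_pos hB hc))).exists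
  have hφcont : ContinuousOn φ (Icc a (B / c)) :=
    ((continuousOn_const.sub (continuousOn_const.mul continuousOn_id)).mul
      ((hcont.mono fun x hx => ha.1.trans_le hx.1).div continuousOn_id
        fun x hx => (ha.1.trans_le hx.1).ne'))
  have hφB : φ (B / c) = 0 := by simp [hφ, mul_div_cancel₀ B hc.ne']
  refine existsUnique_of_exists_of_unique ?_ ?_
  · obtain ⟨x, hx, hφx⟩ := intermediate_value_Icc' ha.2.le hφcont ⟨hφB ▸ hk.le, hka.le⟩
    exact ⟨x, ha.1.trans_le hx.1, hφx⟩
  · have hφanti : StrictAntiOn φ (Ioc 0 (B / c)) := fun x hx y hy hxy =>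
      mul_lt_mul'' (sub_lt_sub_left (mul_lt_mul_of_pos_left hxy hc) B)
        (hanti hx.1 hy.1 hxy) (sub_nonneg.2 ((le_div_iff₀' hc).1 hy.2))
        (div_pos (hpos y hy.1) hy.1).le
    have hroot_mem : ∀ x, 0 < x → φ x = k → x ∈ Ioc 0 (B / c) := fun x hx hφx =>
      have hsub : 0 < B - c * x :=
        pos_of_mul_pos_left (hk.trans_eq hφx.symm) (div_pos (hpos x hx) hx).le
      ⟨hx, (le_div_iff₀' hc).2 (by linarith)⟩
    exact fun x y ⟨hx, hφx⟩ ⟨hy, hφy⟩ =>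
      hφanti.injOn (hroot_mem x hx hφx) (hroot_mem y hy hφy) (hφx.trans hφy.symm)

section SEIRS

variable (G : ℝ → ℝ) (B β μ α d T₁ T₂ T₃ : ℝ)

def IsEndemicEquilibrium (p : ℝ × ℝ × ℝ) : Prop :=
  0 < p.1 ∧ 0 < p.2.1 ∧ 0 < p.2.2 ∧
    B - β * p.1 * exp (-μ * T₁) * G p.2.2 - μ * p.1
      + α * p.2.2 * exp (-μ * T₃) = 0 ∧
    β * p.1 * exp (-μ * T₁) * G p.2.2 - μ * p.2.1
      - β * p.1 * exp (-μ * (T₁ + T₂)) * G p.2.2 = 0 ∧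
    β * p.1 * exp (-μ * (T₁ + T₂)) * G p.2.2 - (μ + d + α) * p.2.2 = 0

noncomputable def equilibriumSlope : ℝ := (μ + d + α) * exp (μ * T₂) - α * exp (-μ * T₃)

noncomputable def equilibriumOfInfected (I : ℝ) : ℝ × ℝ × ℝ :=
  ((B - equilibriumSlope μ α d T₂ T₃ * I) / μ,
    β * (B - equilibriumSlope μ α d T₂ T₃ * I) * (exp (-μ * T₁) - exp (-μ * (T₁ + T₂))) * G I
      / μ ^ 2,
    I)

variable {μ α d T₂ T₃}

theorem equilibriumSlope_pos (hμ : 0 < μ) (hα : 0 ≤ α) (hd : 0 ≤ d) (hT₂ : 0 ≤ T₂)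
    (hT₃ : 0 ≤ T₃) : 0 < equilibriumSlope μ α d T₂ T₃ := by
  have h₂ : 1 ≤ exp (μ * T₂) := one_le_exp (mul_nonneg hμ.le hT₂)
  have h₃ : exp (-μ * T₃) ≤ 1 := exp_le_one_iff.2 (by nlinarith)
  unfold equilibriumSlope
  nlinarith

variable {G B β T₁}

theorem IsEndemicEquilibrium.eq_equilibriumOfInfected (hβ : 0 < β) (hμ : 0 < μ)
    {p : ℝ × ℝ × ℝ} (hp : IsEndemicEquilibrium G B β μ α d T₁ T₂ T₃ p) :
    0 < p.2.2 ∧ (B - equilibriumSlope μ α d T₂ T₃ * p.2.2) * (G p.2.2 / p.2.2)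
      = μ * (μ + d + α) * exp (μ * (T₁ + T₂)) / β ∧
    p = equilibriumOfInfected G B β μ α d T₁ T₂ T₃ p.2.2 := by
  obtain ⟨S, E, I⟩ := p
  obtain ⟨-, -, hI, q₁, q₂, q₃⟩ := hp
  have hμS : μ * S = B - equilibriumSlope μ α d T₂ T₃ * I := by
    unfold equilibriumSlope
    linear_combination -q₁ - exp (μ * T₂) * q₃
      - β * S * G I * exp_neg_mul_eq_exp_neg_mul_add_mul_exp μ T₁ T₂
  refine ⟨hI, ?_, ?_⟩
  · rw [← hμS, mul_div_assoc', div_eq_div_iff hI.ne' hβ.ne']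
    linear_combination (μ * exp (μ * (T₁ + T₂))) * q₃
      - (μ * β * S * G I) * exp_neg_mul_mul_exp_mul μ (T₁ + T₂)
  · simp only [equilibriumOfInfected, Prod.mk.injEq, and_true, ← hμS]
    exact ⟨eq_div_of_mul_eq hμ.ne' (by linarith),
      eq_div_of_mul_eq (pow_ne_zero 2 hμ.ne') (by linear_combination (-μ) * q₂)⟩

theorem isEndemicEquilibrium_equilibriumOfInfected (hβ : 0 < β) (hμ : 0 < μ)
    (hK : 0 < μ + d + α) (hT₂ : 0 < T₂) (hG : ∀ x > 0, 0 < G x) {I : ℝ} (hI : 0 < I)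
    (hroot : (B - equilibriumSlope μ α d T₂ T₃ * I) * (G I / I)
      = μ * (μ + d + α) * exp (μ * (T₁ + T₂)) / β) :
    IsEndemicEquilibrium G B β μ α d T₁ T₂ T₃ (equilibriumOfInfected G B β μ α d T₁ T₂ T₃ I) := by
  have hc : equilibriumSlope μ α d T₂ T₃ = (μ + d + α) * exp (μ * T₂) - α * exp (-μ * T₃) := rfl
  set c := equilibriumSlope μ α d T₂ T₃
  simp only [IsEndemicEquilibrium, equilibriumOfInfected]
  rw [mul_div_assoc', div_eq_div_iff hI.ne' hβ.ne'] at hroot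
  have hsub : 0 < B - c * I := by
    have : 0 < (B - c * I) * G I * β := by
      rw [hroot]; exact mul_pos (mul_pos (mul_pos hμ hK) (exp_pos _)) hI
    exact pos_of_mul_pos_left (pos_of_mul_pos_left this hβ.le) (hG I hI).le
  have hkey : β * (B - c * I) * exp (-μ * (T₁ + T₂)) * G I = μ * (μ + d + α) * I := by
    linear_combination exp (-μ * (T₁ + T₂)) * hroot
      + μ * (μ + d + α) * I * exp_neg_mul_mul_exp_mul μ (T₁ + T₂)
  have hμinv : μ * μ⁻¹ = 1 := mul_inv_cancel₀ hμ.ne'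
  have h₃ : β * ((B - c * I) / μ) * exp (-μ * (T₁ + T₂)) * G I - (μ + d + α) * I = 0 := by
    linear_combination μ⁻¹ * hkey + (μ + d + α) * I * hμinv
  refine ⟨div_pos hsub hμ, ?_, hI, ?_, ?_, h₃⟩
  · exact div_pos (mul_pos (mul_pos (mul_pos hβ hsub)
      (sub_pos.2 (exp_neg_mul_add_lt_exp_neg_mul T₁ hμ hT₂))) (hG I hI)) (pow_pos hμ 2)
  · linear_combination
      (-β * ((B - c * I) / μ) * G I) * exp_neg_mul_eq_exp_neg_mul_add_mul_exp μ T₁ T₂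
        - exp (μ * T₂) * h₃ + I * hc - (B - c * I) * hμinv
  · field_simp
    ring

end SEIRS

theorem endemic_equilibrium_constant_delays_general
    (G g : ℝ → ℝ)
    (hderiv : ∀ x ≥ (0:ℝ), HasDerivAt G (g x) x)
    (hG0 : G 0 = 0)
    (hGmono : StrictMonoOn G (Set.Ici (0:ℝ)))
    (hganti : StrictAntiOn g (Set.Ici (0:ℝ)))
    (B β μ α d T₁ T₂ T₃ : ℝ) (hB : 0 < B) (hβ : 0 < β) (hμ : 0 < μ)
    (hα : 0 ≤ α) (hd : 0 ≤ d)
    (hT₂ : 0 < T₂) (hT₃ : 0 ≤ T₃)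
    (S₀ : ℝ) (hS₀ : S₀ = B / μ)
    (hR₀ : 1 < β * S₀ / (μ + d + α))
    (hcond : T₁ + T₂ ≤ (1 / μ) * Real.log (g 0)) :
    ∃! p : ℝ × ℝ × ℝ,
      0 < p.1 ∧ 0 < p.2.1 ∧ 0 < p.2.2 ∧
      B - β * p.1 * Real.exp (-μ * T₁) * G p.2.2 - μ * p.1
        + α * p.2.2 * Real.exp (-μ * T₃) = 0 ∧
      β * p.1 * Real.exp (-μ * T₁) * G p.2.2 - μ * p.2.1
        - β * p.1 * Real.exp (-μ * (T₁ + T₂)) * G p.2.2 = 0 ∧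
      β * p.1 * Real.exp (-μ * (T₁ + T₂)) * G p.2.2 - (μ + d + α) * p.2.2 = 0 := by
  have hK : 0 < μ + d + α := by linarith
  have hGpos : ∀ x > 0, 0 < G x := fun x hx => hG0 ▸ hGmono self_mem_Ici (mem_Ici.2 hx.le) hx
  have hanti := (strictConcaveOn_Ici_of_hasDerivAt hderiv
    (hganti.mono Ioi_subset_Ici_self)).strictAntiOn_div_self hG0
  have hlim := (hderiv 0 le_rfl).tendsto_div_self_nhdsGT_zero hG0
  have hg0 : 0 < g 0 := by
    have hslope := hanti.antitoneOn.le_of_tendsto_nhdsGT hlim one_pos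
    rw [div_one] at hslope
    exact (hGpos 1 one_pos).trans_le hslope
  have hR₀' : μ * (μ + d + α) < β * B := by
    rw [hS₀, mul_div_assoc', one_lt_div hK, lt_div_iff₀' hμ] at hR₀
    linarith
  have hdelays : exp (μ * (T₁ + T₂)) ≤ g 0 := by
    rw [one_div_mul_eq_div, le_div_iff₀' hμ] at hcond
    simpa [exp_log hg0] using exp_le_exp.2 hcond
  have hthreshold : μ * (μ + d + α) * exp (μ * (T₁ + T₂)) / β < B * g 0 := by
    rw [div_lt_iff₀ hβ]
    nlinarith [exp_pos (μ * (T₁ + T₂)), mul_pos hβ hB]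
  obtain ⟨I, ⟨hI, hroot⟩, huniq⟩ := existsUnique_pos_sub_mul_mul_div_self_eq
    (fun x hx => (hderiv x (le_of_lt hx)).continuousAt.continuousWithinAt) hlim hanti hGpos hB
    (equilibriumSlope_pos hμ hα hd hT₂.le hT₃)
    (div_pos (mul_pos (mul_pos hμ hK) (exp_pos _)) hβ) hthreshold
  refine ⟨equilibriumOfInfected G B β μ α d T₁ T₂ T₃ I,
    isEndemicEquilibrium_equilibriumOfInfected hβ hμ hK hT₂ hGpos hI hroot, fun p hp => ?_⟩
  obtain ⟨hI', hroot', hp⟩ := IsEndemicEquilibrium.eq_equilibriumOfInfected hβ hμ hp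
  rw [hp, huniq _ ⟨hI', hroot'⟩]

/-- Theorem 5.2 of the paper: existence and uniqueness of the positive endemic
equilibrium of the deterministic SEIRS malaria model with constant delays
`T₁`, `T₂`, `T₃`. -/
theorem endemic_equilibrium_constant_delays
    (G g : ℝ → ℝ)
    (hderiv : ∀ x ≥ (0:ℝ), HasDerivAt G (g x) x)
    (hG0 : G 0 = 0)
    (hGmono : StrictMonoOn G (Set.Ici (0:ℝ)))
    (hganti : StrictAntiOn g (Set.Ici (0:ℝ)))
    (B β μ α d T₁ T₂ T₃ : ℝ) (hB : 0 < B) (hβ : 0 < β) (hμ : 0 < μ)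
    (hα : 0 ≤ α) (hd : 0 ≤ d)
    (hT₁ : 0 ≤ T₁) (hT₂ : 0 < T₂) (hT₃ : 0 ≤ T₃)
    (S₀ : ℝ) (hS₀ : S₀ = B / μ)
    (hR₀ : 1 < β * S₀ / (μ + d + α))
    (hcond : T₁ + T₂ ≤ (1 / μ) * Real.log (g 0)) :
    ∃! p : ℝ × ℝ × ℝ,
      0 < p.1 ∧ 0 < p.2.1 ∧ 0 < p.2.2 ∧
      B - β * p.1 * Real.exp (-μ * T₁) * G p.2.2 - μ * p.1
        + α * p.2.2 * Real.exp (-μ * T₃) = 0 ∧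
      β * p.1 * Real.exp (-μ * T₁) * G p.2.2 - μ * p.2.1
        - β * p.1 * Real.exp (-μ * (T₁ + T₂)) * G p.2.2 = 0 ∧
      β * p.1 * Real.exp (-μ * (T₁ + T₂)) * G p.2.2 - (μ + d + α) * p.2.2 = 0 :=
  endemic_equilibrium_constant_delays_general G g hderiv hG0 hGmono hganti B β μ α d T₁ T₂ T₃ hB hβ
    hμ hα hd hT₂ hT₃ S₀ hS₀ hR₀ hcond
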